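/- Let (M, c) be a gem with more than 4 vertices that has a 2-edge cut. Let c' be any colouring obtained from c by swapping the colours red and blue on a set of edges that is a union of connected components of the spanning subgraph formed by the red and blue edges (and leaving all other colours unchanged). Then there exist a connected component H1 of the spanning subgraph formed by the edges coloured red or yellow under c', and a connected component H2 of the spanning subgraph formed by the edges coloured blue or yellow under c', such that H1 and H2 share at least two edges. (In the embedding represented by the gem (M, c'), this says there is a bad vertex/face pair, so no partial dual of the original embedding is a closed 2-cell embedding.) -/

import Mathlib

/-- The three colours used in a gem. -/
inductive Colour : Type
  | red | yellow | blue
deriving DecidableEq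

/-- A proper edge colouring of a graph: two distinct edges sharing an endpoint
receive different colours. -/
def ProperEdgeColouring {V : Type*} {α : Type*} (G : SimpleGraph V) (c : Sym2 V → α) : Prop :=
  ∀ e₁ ∈ G.edgeSet, ∀ e₂ ∈ G.edgeSet, e₁ ≠ e₂ → (∃ v, v ∈ e₁ ∧ v ∈ e₂) → c e₁ ≠ c e₂

/-- A cubic graph: every vertex has degree 3. -/
def IsCubic {V : Type*} (G : SimpleGraph V) : Prop :=
  ∀ v : V, (G.neighborSet v).ncard = 3

/-- The edge cut determined by a vertex set `S`: the set of edges of `G`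
with exactly one endpoint in `S`. -/
def edgeCut {V : Type*} (G : SimpleGraph V) (S : Set V) : Set (Sym2 V) :=
  {e | ∃ u v, e = s(u, v) ∧ G.Adj u v ∧ u ∈ S ∧ v ∉ S}

/-- The spanning subgraph of `G` formed by the edges coloured `x` or `y`. -/
def twoColourSubgraph {V : Type*} {α : Type*} (G : SimpleGraph V) (c : Sym2 V → α)
    (x y : α) : SimpleGraph V where
  Adj u v := G.Adj u v ∧ (c s(u, v) = x ∨ c s(u, v) = y)
  symm := by
    refine ⟨fun u v h => ?_⟩
    refine ⟨h.1.symm, ?_⟩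
    rw [Sym2.eq_swap]
    exact h.2
  loopless := ⟨fun v h => G.loopless.irrefl v h.1⟩

/-- A gem: a connected cubic graph with a proper 3-edge-colouring (red, yellow,
blue) such that every connected component of the spanning subgraph formed by
the red and blue edges is a cycle of length 4 (equivalently, for a simple
graph: that subgraph is 2-regular and each of its connected components has
exactly 4 vertices). -/
structure IsGem {V : Type*} (M : SimpleGraph V) (c : Sym2 V → Colour) : Prop where
  connected : M.Connected
  cubic : IsCubic M
  proper : ProperEdgeColouring M c
  rb_two_regular : ∀ v : V,
    ((twoColourSubgraph M c Colour.red Colour.blue).neighborSet v).ncard = 2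
  rb_components_card4 : ∀ v : V,
    ((twoColourSubgraph M c Colour.red Colour.blue).connectedComponentMk v).supp.ncard = 4

/-- Exchange red and blue, leaving yellow fixed. -/
def swapColour : Colour → Colour
  | Colour.red => Colour.blue
  | Colour.blue => Colour.red
  | Colour.yellow => Colour.yellow

open Classical in
/-- The colouring obtained from `c` by swapping the colours red and blue on
every edge of `D` and leaving all other edges unchanged. -/
noncomputable def swapRB {V : Type*} (c : Sym2 V → Colour) (D : Set (Sym2 V)) :
    Sym2 V → Colour :=
  fun e => if e ∈ D then swapColour (c e) else c e

/-- `D` is a union of connected components of the red-blue spanning subgraph: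
every edge of `D` is a red-blue edge, and any two red-blue edges lying in the
same connected component of the red-blue subgraph are either both in `D` or
both outside `D`. -/
def UnionOfRBComponents {V : Type*} (M : SimpleGraph V) (c : Sym2 V → Colour)
    (D : Set (Sym2 V)) : Prop :=
  D ⊆ (twoColourSubgraph M c Colour.red Colour.blue).edgeSet ∧
  ∀ e₁ ∈ (twoColourSubgraph M c Colour.red Colour.blue).edgeSet,
    ∀ e₂ ∈ (twoColourSubgraph M c Colour.red Colour.blue).edgeSet,
      (∃ u v, u ∈ e₁ ∧ v ∈ e₂ ∧
        (twoColourSubgraph M c Colour.red Colour.blue).Reachable u v) →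
      (e₁ ∈ D ↔ e₂ ∈ D)

/-!
Under `c' = swapRB c D` every vertex still meets each colour exactly once, and the red-blue
subgraph (hence each of its 4-cycles) is unchanged. Any two colours of `c'` span a 2-regular
subgraph, which meets every edge cut in an even number of edges. For a 2-edge cut
`{ab, a'b'}` with `a, a' ∈ S` this forces both cut edges to have the same colour, and puts `a`
and `a'` in one component of every two-colour subgraph containing `ab`. If the cut edges are
yellow, they are themselves the two shared edges. If they are red (or blue), the red-blue 4-cycle
through `ab` must be `a b b' a'`, so `aa'` is blue (or red); the yellow edges at `a` and `a'` then
lie in one red-yellow component (through the cut) and in one blue-yellow component (through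
`aa'`).
-/

instance : Fintype Colour :=
  ⟨{Colour.red, Colour.yellow, Colour.blue}, fun x => by cases x <;> decide⟩

theorem Colour.exists_ne_ne (x y : Colour) : ∃ z, z ≠ x ∧ z ≠ y := by
  revert x y; decide

theorem swapColour_involutive : Function.Involutive swapColour := by
  intro x; cases x <;> rfl

theorem twoColourSubgraph_le {V α : Type*} (M : SimpleGraph V) (c : Sym2 V → α) (x y : α) :
    twoColourSubgraph M c x y ≤ M :=
  fun _ _ h => h.1

theorem twoColourSubgraph_comm {V α : Type*} (M : SimpleGraph V) (c : Sym2 V → α) (x y : α) :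
    twoColourSubgraph M c x y = twoColourSubgraph M c y x := by
  ext u v
  exact and_congr_right fun _ => or_comm

open Colour in
theorem twoColourSubgraph_swapRB_red_blue {V : Type*} (M : SimpleGraph V) (c : Sym2 V → Colour)
    (D : Set (Sym2 V)) :
    twoColourSubgraph M (swapRB c D) red blue = twoColourSubgraph M c red blue := by
  ext u v
  refine and_congr_right fun _ => ?_
  unfold swapRB
  split_ifs <;> cases c s(u, v) <;> decide

open Finset in
theorem even_ncard_edgeCut {V : Type*} [Finite V] (H : SimpleGraph V)
    (hdeg : ∀ v, Even (H.neighborSet v).ncard) (S : Set V) : Even (edgeCut H S).ncard := by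
  classical
  have := Fintype.ofFinite V
  have hdegree : ∑ v ∈ S.toFinset, H.degree v = #{d : H.Dart | d.fst ∈ S} := by
    rw [card_eq_sum_card_fiberwise (f := fun d : H.Dart => d.fst) (t := S.toFinset)
      fun d hd => by simpa using hd]
    refine sum_congr rfl fun v hv => ?_
    rw [← H.dart_fst_fiber_card_eq_degree, filter_filter]
    congr 1; ext d; simp only [mem_filter, mem_univ, true_and]
    constructor
    · rintro rfl; exact ⟨Set.mem_toFinset.1 hv, rfl⟩
    · exact And.right
  have hinner : Even #{d : H.Dart | d.fst ∈ S ∧ d.snd ∈ S} := by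
    rw [← ZMod.natCast_eq_zero_iff_even, card_eq_sum_ones, Nat.cast_sum, Nat.cast_one]
    refine sum_involution (fun d _ => d.symm) (fun _ _ => by decide) (fun d _ _ => d.symm_ne)
      (fun d hd => ?_) (fun d _ => d.symm_symm)
    simp only [mem_filter, mem_univ, true_and, SimpleGraph.Dart.symm_toProd, Prod.fst_swap,
      Prod.snd_swap] at hd ⊢
    exact hd.symm
  have hcut : (edgeCut H S).ncard = #{d : H.Dart | d.fst ∈ S ∧ d.snd ∉ S} := by
    have himage : edgeCut H S = ↑(({d : H.Dart | d.fst ∈ S ∧ d.snd ∉ S} : Finset _).image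
        SimpleGraph.Dart.edge) := by
      ext e
      simp only [edgeCut, Set.mem_ofPred_eq, coe_image, coe_filter, mem_univ, true_and,
        Set.mem_image]
      constructor
      · rintro ⟨u, v, rfl, huv, hu, hv⟩
        exact ⟨⟨(u, v), huv⟩, ⟨hu, hv⟩, rfl⟩
      · rintro ⟨d, ⟨hu, hv⟩, rfl⟩
        exact ⟨d.fst, d.snd, rfl, d.adj, hu, hv⟩
    rw [himage, Set.ncard_coe_finset]
    refine card_image_of_injOn fun d hd d' hd' h => ?_
    simp only [coe_filter, mem_univ, true_and, Set.mem_ofPred_eq] at hd hd'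
    rcases (H.dart_edge_eq_iff d d').1 h with h | rfl
    · exact h
    · exact absurd hd'.1 hd.2
  have hsum : Even (∑ v ∈ S.toFinset, H.degree v) :=
    even_sum _ fun v _ => by
      simpa [← H.card_neighborSet_eq_degree, Set.ncard_eq_toFinset_card'] using hdeg v
  rw [hdegree, ← card_filter_add_card_filter_not (fun d : H.Dart => d.snd ∈ S),
    filter_filter, filter_filter] at hsum
  rw [hcut]
  simpa [Nat.even_add, hinner] using hsum

theorem reachable_of_edgeCut_subset_pair {V : Type*} [Finite V] {M H : SimpleGraph V}
    (hHM : H ≤ M) (hdeg : ∀ v, Even (H.neighborSet v).ncard) {S : Set V} {a b a' b' : V}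
    (hcut : edgeCut M S ⊆ {s(a, b), s(a', b')}) (ha : a ∈ S) (hb : b ∉ S) (hb' : b' ∉ S)
    (hab : H.Adj a b) : H.Reachable a a' := by
  -- parity of the cut around the part of S reachable from a
  set T := S ∩ {v | H.Reachable a v}
  have hsub : edgeCut H T ⊆ {s(a, b), s(a', b')} := by
    rintro _ ⟨u, v, rfl, huv, ⟨huS, hau⟩, hvT⟩
    exact hcut ⟨u, v, rfl, hHM huv, huS, fun hvS => hvT ⟨hvS, hau.trans huv.reachable⟩⟩
  have hab_mem : s(a, b) ∈ edgeCut H T := ⟨a, b, rfl, hab, ⟨ha, .refl a⟩, fun h => hb h.1⟩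
  have ha'b'_mem : s(a', b') ∈ edgeCut H T := by
    by_contra h
    have hT : edgeCut H T = {s(a, b)} :=
      Set.Subset.antisymm (fun e he => (hsub he).resolve_right fun h' => h (h' ▸ he))
        (Set.singleton_subset_iff.2 hab_mem)
    have := even_ncard_edgeCut H hdeg T
    rw [hT, Set.ncard_singleton] at this
    exact Nat.not_even_one this
  obtain ⟨u, v, huv, -, huT, -⟩ := ha'b'_mem
  rcases Sym2.eq_iff.1 huv with ⟨rfl, -⟩ | ⟨-, rfl⟩
  · exact huT.2
  · exact absurd huT.1 hb'

theorem exists_of_ncard_edgeCut_eq_two {V : Type*} {M : SimpleGraph V} {S : Set V}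
    (h : (edgeCut M S).ncard = 2) :
    ∃ a b a' b', a ∈ S ∧ b ∉ S ∧ a' ∈ S ∧ b' ∉ S ∧ M.Adj a b ∧ M.Adj a' b' ∧
      s(a, b) ≠ s(a', b') ∧ edgeCut M S ⊆ {s(a, b), s(a', b')} := by
  obtain ⟨e, e', hne, hee'⟩ := Set.ncard_eq_two.1 h
  obtain ⟨a, b, rfl, hab, ha, hb⟩ : e ∈ edgeCut M S := hee' ▸ Set.mem_insert _ _
  obtain ⟨a', b', rfl, ha'b', ha', hb'⟩ : e' ∈ edgeCut M S :=
    hee' ▸ Set.mem_insert_of_mem _ rfl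
  exact ⟨a, b, a', b', ha, hb, ha', hb', hab, ha'b', hne, hee'.subset⟩

section Components

variable {V : Type*}

def InSameComponent (H : SimpleGraph V) (g₁ g₂ : Sym2 V) : Prop :=
  g₁ ∈ H.edgeSet ∧ g₂ ∈ H.edgeSet ∧ ∃ u v, u ∈ g₁ ∧ v ∈ g₂ ∧ H.Reachable u v

def ShareTwoEdges (H₁ H₂ : SimpleGraph V) : Prop :=
  ∃ g₁ g₂, g₁ ≠ g₂ ∧ InSameComponent H₁ g₁ g₂ ∧ InSameComponent H₂ g₁ g₂

theorem inSameComponent_of_reachable {H : SimpleGraph V} {a b a' b' : V} (hab : H.Adj a b)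
    (ha'b' : H.Adj a' b') (h : H.Reachable a a') : InSameComponent H s(a, b) s(a', b') :=
  ⟨hab, ha'b', a, a', Sym2.mem_mk_left _ _, Sym2.mem_mk_left _ _, h⟩

theorem ShareTwoEdges.symm {H₁ H₂ : SimpleGraph V} (h : ShareTwoEdges H₁ H₂) :
    ShareTwoEdges H₂ H₁ :=
  let ⟨g₁, g₂, hne, h₁, h₂⟩ := h
  ⟨g₁, g₂, hne, h₂, h₁⟩

end Components

def IsRainbow {V α : Type*} (M : SimpleGraph V) (c : Sym2 V → α) : Prop :=
  ∀ v (x : α), ∃! u, M.Adj v u ∧ c s(v, u) = x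

namespace IsRainbow

variable {V α : Type*} {M : SimpleGraph V} {c : Sym2 V → α}

theorem eq_of_colour_eq (hc : IsRainbow M c) {v u w : V} (hu : M.Adj v u) (hw : M.Adj v w)
    (h : c s(v, u) = c s(v, w)) : u = w :=
  (hc v (c s(v, w))).unique ⟨hu, h⟩ ⟨hw, rfl⟩

theorem ncard_neighborSet_twoColourSubgraph (hc : IsRainbow M c) {x y : α} (hxy : x ≠ y)
    (v : V) : ((twoColourSubgraph M c x y).neighborSet v).ncard = 2 := by
  obtain ⟨u, ⟨hu, hux⟩, hu'⟩ := hc v x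
  obtain ⟨w, ⟨hw, hwy⟩, hw'⟩ := hc v y
  have : (twoColourSubgraph M c x y).neighborSet v = {u, w} := by
    ext t
    constructor
    · rintro ⟨ht, htx | hty⟩
      exacts [.inl (hu' t ⟨ht, htx⟩), .inr (hw' t ⟨ht, hty⟩)]
    · rintro (rfl | rfl)
      exacts [⟨hu, .inl hux⟩, ⟨hw, .inr hwy⟩]
  rw [this, Set.ncard_pair]
  rintro rfl
  exact hxy (hux.symm.trans hwy)

theorem reachable_of_edgeCut_subset_pair [Finite V] (hc : IsRainbow M c) {x y : α}
    (hxy : x ≠ y) {S : Set V} {a b a' b' : V} (hcut : edgeCut M S ⊆ {s(a, b), s(a', b')})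
    (ha : a ∈ S) (hb : b ∉ S) (hb' : b' ∉ S) (hab : (twoColourSubgraph M c x y).Adj a b) :
    (twoColourSubgraph M c x y).Reachable a a' :=
  _root_.reachable_of_edgeCut_subset_pair (twoColourSubgraph_le M c x y)
    (fun v => ⟨1, hc.ncard_neighborSet_twoColourSubgraph hxy v⟩) hcut ha hb hb' hab

theorem of_eq_comp_involutive {c' : Sym2 V → α} (hc : IsRainbow M c)
    (h : ∀ v, ∃ f : α → α, f.Involutive ∧ ∀ u, M.Adj v u → c' s(v, u) = f (c s(v, u))) :
    IsRainbow M c' := by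
  intro v x
  obtain ⟨f, hf, hc'⟩ := h v
  obtain ⟨u, ⟨hu, hux⟩, huniq⟩ := hc v (f x)
  refine ⟨u, ⟨hu, by rw [hc' u hu, hux, hf]⟩, fun w ⟨hw, hwx⟩ => huniq w ⟨hw, ?_⟩⟩
  rw [← hwx, hc' w hw, hf]

end IsRainbow

theorem IsRainbow.colour_eq_of_edgeCut_subset_pair {V : Type*} [Finite V] {M : SimpleGraph V}
    {c : Sym2 V → Colour} (hc : IsRainbow M c) {S : Set V} {a b a' b' : V}
    (hcut : edgeCut M S ⊆ {s(a, b), s(a', b')}) (ha : a ∈ S) (hb : b ∉ S) (hab : M.Adj a b) :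
    c s(a, b) = c s(a', b') := by
  by_contra hne
  -- the two colours `c s(a, b)` and `z` form a 2-regular subgraph crossing `S` only at `ab`
  obtain ⟨z, hzx, hzy⟩ := Colour.exists_ne_ne (c s(a, b)) (c s(a', b'))
  set H := twoColourSubgraph M c (c s(a, b)) z
  have hH : edgeCut H S = {s(a, b)} := by
    refine Set.Subset.antisymm ?_
      (Set.singleton_subset_iff.2 ⟨a, b, rfl, ⟨hab, .inl rfl⟩, ha, hb⟩)
    rintro _ ⟨u, v, rfl, huv, hu, hv⟩
    refine (hcut ⟨u, v, rfl, huv.1, hu, hv⟩).resolve_right fun h => ?_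
    rcases huv.2 with h' | h' <;> rw [h] at h'
    exacts [hne h'.symm, hzy h'.symm]
  have := even_ncard_edgeCut H
    (fun v => ⟨1, hc.ncard_neighborSet_twoColourSubgraph hzx.symm v⟩) S
  rw [hH, Set.ncard_singleton] at this
  exact Nat.not_even_one this

theorem IsGem.isRainbow {V : Type*} {M : SimpleGraph V} {c : Sym2 V → Colour}
    (hgem : IsGem M c) : IsRainbow M c := by
  intro v x
  have hinj : (M.neighborSet v).InjOn fun u => c s(v, u) := fun u hu w hw h => by
    by_contra hne
    exact hgem.proper _ hu _ hw (mt Sym2.congr_right.1 hne)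
      ⟨v, Sym2.mem_mk_left _ _, Sym2.mem_mk_left _ _⟩ h
  have hsurj : (fun u => c s(v, u)) '' M.neighborSet v = Set.univ :=
    Set.eq_of_subset_of_ncard_le (Set.subset_univ _)
      (by rw [Set.ncard_univ, hinj.ncard_image, hgem.cubic v, Nat.card_eq_fintype_card]; rfl)
      (Set.toFinite _)
  obtain ⟨u, hu, hux⟩ := hsurj.symm ▸ Set.mem_univ x
  exact ⟨u, ⟨hu, hux⟩, fun w ⟨hw, hwx⟩ => hinj hw hu (hwx.trans hux.symm)⟩

open Colour in
theorem UnionOfRBComponents.swapRB_incident {V : Type*} {M : SimpleGraph V}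
    {c : Sym2 V → Colour} {D : Set (Sym2 V)} (hD : UnionOfRBComponents M c D) (v : V) :
    ∃ f : Colour → Colour, f.Involutive ∧
      ∀ u, M.Adj v u → swapRB c D s(v, u) = f (c s(v, u)) := by
  by_cases h : ∃ u, M.Adj v u ∧ s(v, u) ∈ D
  · obtain ⟨u₀, -, hu₀⟩ := h
    refine ⟨swapColour, swapColour_involutive, fun u hu => ?_⟩
    by_cases hrb : c s(v, u) = red ∨ c s(v, u) = blue
    · have hu : s(v, u) ∈ D := (hD.2 _ (hD.1 hu₀) _ ((SimpleGraph.mem_edgeSet _).2 ⟨hu, hrb⟩)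
        ⟨v, v, Sym2.mem_mk_left _ _, Sym2.mem_mk_left _ _, .refl v⟩).1 hu₀
      simp only [swapRB, hu, if_true]
    · have hy : c s(v, u) = yellow := by
        cases hcu : c s(v, u) <;> simp_all
      have hu : s(v, u) ∉ D := fun h => hrb (hD.1 h).2
      simp only [swapRB, hu, if_false, hy, swapColour]
  · push Not at h
    exact ⟨id, fun _ => rfl, fun u hu => by simp only [swapRB, h u hu, if_false, id]⟩

namespace IsRainbow

variable {V α : Type*} [Finite V] {M : SimpleGraph V} {c : Sym2 V → α} {S : Set V}
  {a b a' b' : V}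

theorem adj_of_edgeCut_subset_pair (hc : IsRainbow M c) {x z : α} (hxz : x ≠ z)
    (hcomp : ∀ v, ((twoColourSubgraph M c x z).connectedComponentMk v).supp.ncard = 4)
    (hcut : edgeCut M S ⊆ {s(a, b), s(a', b')}) (ha : a ∈ S) (hb : b ∉ S) (ha' : a' ∈ S)
    (hb' : b' ∉ S) (hab : M.Adj a b) (ha'b' : M.Adj a' b') (hne : s(a, b) ≠ s(a', b'))
    (hcab : c s(a, b) = x) (hca'b' : c s(a', b') = x) :
    M.Adj a a' ∧ c s(a, a') = z := by
  set H := twoColourSubgraph M c x z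
  have haa' : a ≠ a' := by
    rintro rfl
    exact hne (by rw [hc.eq_of_colour_eq hab ha'b' (hcab.trans hca'b'.symm)])
  have hbb' : b ≠ b' := by
    rintro rfl
    refine haa' (hc.eq_of_colour_eq hab.symm ha'b'.symm ?_)
    rw [Sym2.eq_swap, hcab, Sym2.eq_swap, hca'b']
  have hreach : H.Reachable a a' :=
    hc.reachable_of_edgeCut_subset_pair hxz hcut ha hb hb' ⟨hab, .inl hcab⟩
  -- the component of `a` has only four vertices, so it consists of the two cut edges
  have hK : {a, b, a', b'} = (H.connectedComponentMk a).supp := by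
    refine Set.eq_of_subset_of_ncard_le ?_ ?_ (Set.toFinite _)
    · have hmem (w : V) (h : H.Reachable w a) : w ∈ (H.connectedComponentMk a).supp :=
        (SimpleGraph.ConnectedComponent.mem_supp_iff _ _).2
          (SimpleGraph.ConnectedComponent.sound h)
      rintro w (rfl | rfl | rfl | rfl)
      · exact hmem w .rfl
      · exact hmem w (show H.Adj a w from ⟨hab, .inl hcab⟩).reachable.symm
      · exact hmem w hreach.symm
      · exact hmem w
          ((show H.Adj a' w from ⟨ha'b', .inl hca'b'⟩).reachable.symm.trans hreach.symm)
    · have hab' : a ≠ b' := fun h => hb' (h ▸ ha)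
      have ha'b : a' ≠ b := fun h => hb (h ▸ ha')
      rw [hcomp a, Set.ncard_insert_of_notMem (by simp [hab.ne, haa', hab']),
        Set.ncard_insert_of_notMem (by simp [ha'b.symm, hbb']), Set.ncard_pair ha'b'.ne]
  obtain ⟨w, ⟨haw, hwz⟩, -⟩ := hc a z
  have hw : w ∈ ({a, b, a', b'} : Set V) := by
    rw [hK, SimpleGraph.ConnectedComponent.mem_supp_iff, SimpleGraph.ConnectedComponent.eq]
    exact (show H.Adj a w from ⟨haw, .inr hwz⟩).reachable.symm
  rcases hw with rfl | rfl | rfl | rfl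
  · exact absurd haw (M.loopless.irrefl w)
  · exact absurd (hcab.symm.trans hwz) hxz
  · exact ⟨haw, hwz⟩
  · rcases hcut ⟨a, w, rfl, haw, ha, hb'⟩ with h | h
    · exact absurd (Sym2.congr_right.1 h).symm hbb'
    · rcases Sym2.eq_iff.1 h with ⟨h, -⟩ | ⟨h, -⟩
      exacts [absurd h haa', absurd ha (h ▸ hb')]

theorem shareTwoEdges_of_cut_colour_eq_left (hc : IsRainbow M c) {x y z : α} (hxz : x ≠ z)
    (hxy : x ≠ y) (hzy : z ≠ y)
    (hcomp : ∀ v, ((twoColourSubgraph M c x z).connectedComponentMk v).supp.ncard = 4)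
    (hcut : edgeCut M S ⊆ {s(a, b), s(a', b')}) (ha : a ∈ S) (hb : b ∉ S) (ha' : a' ∈ S)
    (hb' : b' ∉ S) (hab : M.Adj a b) (ha'b' : M.Adj a' b') (hne : s(a, b) ≠ s(a', b'))
    (hcab : c s(a, b) = x) (hca'b' : c s(a', b') = x) :
    ShareTwoEdges (twoColourSubgraph M c x y) (twoColourSubgraph M c z y) := by
  obtain ⟨haa', hcaa'⟩ :=
    hc.adj_of_edgeCut_subset_pair hxz hcomp hcut ha hb ha' hb' hab ha'b' hne hcab hca'b'
  obtain ⟨p, ⟨hap, hpy⟩, -⟩ := hc a y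
  obtain ⟨q, ⟨ha'q, hqy⟩, -⟩ := hc a' y
  refine ⟨s(a, p), s(a', q), ?_,
    inSameComponent_of_reachable ⟨hap, .inr hpy⟩ ⟨ha'q, .inr hqy⟩
      (hc.reachable_of_edgeCut_subset_pair hxy hcut ha hb hb' ⟨hab, .inl hcab⟩),
    inSameComponent_of_reachable ⟨hap, .inr hpy⟩ ⟨ha'q, .inr hqy⟩
      (show (twoColourSubgraph M c z y).Adj a a' from ⟨haa', .inl hcaa'⟩).reachable⟩
  intro h
  rcases Sym2.eq_iff.1 h with ⟨h, -⟩ | ⟨-, rfl⟩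
  exacts [haa'.ne h, hzy (hcaa'.symm.trans hpy)]

theorem shareTwoEdges_of_cut_colour_eq_right (hc : IsRainbow M c) {x₁ x₂ y : α}
    (hx₁ : x₁ ≠ y) (hx₂ : x₂ ≠ y) (hcut : edgeCut M S ⊆ {s(a, b), s(a', b')}) (ha : a ∈ S)
    (hb : b ∉ S) (hb' : b' ∉ S) (hab : M.Adj a b) (ha'b' : M.Adj a' b')
    (hne : s(a, b) ≠ s(a', b')) (hcab : c s(a, b) = y) (hca'b' : c s(a', b') = y) :
    ShareTwoEdges (twoColourSubgraph M c x₁ y) (twoColourSubgraph M c x₂ y) := by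
  have key : ∀ x, x ≠ y → InSameComponent (twoColourSubgraph M c x y) s(a, b) s(a', b') :=
    fun x hx => inSameComponent_of_reachable ⟨hab, .inr hcab⟩ ⟨ha'b', .inr hca'b'⟩
      (hc.reachable_of_edgeCut_subset_pair hx hcut ha hb hb' ⟨hab, .inr hcab⟩)
  exact ⟨_, _, hne, key x₁ hx₁, key x₂ hx₂⟩

end IsRainbow

theorem swapRB_bad_pair_general {V : Type*} [Fintype V]
    (M : SimpleGraph V) (c : Sym2 V → Colour) (hgem : IsGem M c)
    (hcut : ∃ S : Set V, S.Nonempty ∧ Sᶜ.Nonempty ∧ (edgeCut M S).ncard = 2)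
    (D : Set (Sym2 V)) (hD : UnionOfRBComponents M c D) :
    ∃ g1 g2 : Sym2 V, g1 ≠ g2 ∧
      (g1 ∈ (twoColourSubgraph M (swapRB c D) Colour.red Colour.yellow).edgeSet ∧
       g2 ∈ (twoColourSubgraph M (swapRB c D) Colour.red Colour.yellow).edgeSet ∧
       ∃ u v, u ∈ g1 ∧ v ∈ g2 ∧
         (twoColourSubgraph M (swapRB c D) Colour.red Colour.yellow).Reachable u v) ∧
      (g1 ∈ (twoColourSubgraph M (swapRB c D) Colour.blue Colour.yellow).edgeSet ∧
       g2 ∈ (twoColourSubgraph M (swapRB c D) Colour.blue Colour.yellow).edgeSet ∧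
       ∃ u v, u ∈ g1 ∧ v ∈ g2 ∧
         (twoColourSubgraph M (swapRB c D) Colour.blue Colour.yellow).Reachable u v) := by
  show ShareTwoEdges (twoColourSubgraph M (swapRB c D) Colour.red Colour.yellow)
    (twoColourSubgraph M (swapRB c D) Colour.blue Colour.yellow)
  obtain ⟨S, -, -, hS⟩ := hcut
  obtain ⟨a, b, a', b', ha, hb, ha', hb', hab, ha'b', hne, hcutS⟩ :=
    exists_of_ncard_edgeCut_eq_two hS
  have hc : IsRainbow M (swapRB c D) :=
    hgem.isRainbow.of_eq_comp_involutive hD.swapRB_incident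
  have hcomp (v : V) :
      ((twoColourSubgraph M (swapRB c D) Colour.red Colour.blue).connectedComponentMk v).supp.ncard
        = 4 := by
    rw [twoColourSubgraph_swapRB_red_blue]
    exact hgem.rb_components_card4 v
  have hsame := hc.colour_eq_of_edgeCut_subset_pair hcutS ha hb hab
  cases hx : swapRB c D s(a, b)
  case red =>
    exact hc.shareTwoEdges_of_cut_colour_eq_left (by decide) (by decide) (by decide) hcomp
      hcutS ha hb ha' hb' hab ha'b' hne hx (hsame.symm.trans hx)
  case yellow =>
    exact hc.shareTwoEdges_of_cut_colour_eq_right (by decide) (by decide)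
      hcutS ha hb hb' hab ha'b' hne hx (hsame.symm.trans hx)
  case blue =>
    refine (hc.shareTwoEdges_of_cut_colour_eq_left (by decide) (by decide) (by decide) ?_
      hcutS ha hb ha' hb' hab ha'b' hne hx (hsame.symm.trans hx)).symm
    rw [twoColourSubgraph_comm]
    exact hcomp

/-- If a gem with more than 4 vertices has a 2-edge cut, then after swapping
red and blue on any union of connected components of the red-blue spanning
subgraph (a partial dual), there are a connected component of the red-yellow
spanning subgraph and a connected component of the blue-yellow spanning
subgraph (under the new colouring) sharing at least two edges: there are two
distinct edges `g1, g2` lying in a common red-yellow component and in a common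
blue-yellow component.  (So the partial dual embedding has a bad vertex/face
pair and is not closed 2-cell.) -/
theorem swapRB_bad_pair {V : Type*} [Fintype V]
    (M : SimpleGraph V) (c : Sym2 V → Colour) (hgem : IsGem M c)
    (hcard : 4 < Fintype.card V)
    (hcut : ∃ S : Set V, S.Nonempty ∧ Sᶜ.Nonempty ∧ (edgeCut M S).ncard = 2)
    (D : Set (Sym2 V)) (hD : UnionOfRBComponents M c D) :
    ∃ g1 g2 : Sym2 V, g1 ≠ g2 ∧
      (g1 ∈ (twoColourSubgraph M (swapRB c D) Colour.red Colour.yellow).edgeSet ∧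
       g2 ∈ (twoColourSubgraph M (swapRB c D) Colour.red Colour.yellow).edgeSet ∧
       ∃ u v, u ∈ g1 ∧ v ∈ g2 ∧
         (twoColourSubgraph M (swapRB c D) Colour.red Colour.yellow).Reachable u v) ∧
      (g1 ∈ (twoColourSubgraph M (swapRB c D) Colour.blue Colour.yellow).edgeSet ∧
       g2 ∈ (twoColourSubgraph M (swapRB c D) Colour.blue Colour.yellow).edgeSet ∧
       ∃ u v, u ∈ g1 ∧ v ∈ g2 ∧
         (twoColourSubgraph M (swapRB c D) Colour.blue Colour.yellow).Reachable u v) :=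
  swapRB_bad_pair_general M c hgem hcut D hD
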